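/- arXiv:1107.5840 — 3 statements merged into one kernel-verified Lean document; each statement's English description precedes it below -/
import Mathlib

section
/- For the flat Laplacian Δ = η^{ij}∂ᵢ∂ⱼ acting on smooth functions on ℝⁿ and any smooth vector field X on ℝⁿ with divergence Div X = ∂ᵢXⁱ, if X is a conformal Killing vector field for the flat metric η, then Δ ∘ (X + λ Div X) = (X + μ Div X) ∘ Δ as differential operators, where λ = (n−2)/(2n) and μ = (n+2)/(2n). -/
open Finset

/-- Partial derivative `∂ᵢ` of a function on `ℝⁿ`. -/
noncomputable def pd {n : ℕ} (i : Fin n) (f : (Fin n → ℝ) → ℝ) (x : Fin n → ℝ) : ℝ :=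
  fderiv ℝ f x (Pi.single i 1)

/-- The flat Laplacian `Δ = ηⁱʲ∂ᵢ∂ⱼ` for the diagonal metric `η = diag ε`. -/
noncomputable def Lap {n : ℕ} (ε : Fin n → ℝ) (f : (Fin n → ℝ) → ℝ)
    (x : Fin n → ℝ) : ℝ :=
  ∑ i, ε i * pd i (pd i f) x

section helpers
variable {n : ℕ} {f g : (Fin n → ℝ) → ℝ} {x : Fin n → ℝ}

lemma pd_smooth (i : Fin n) (hf : ContDiff ℝ (⊤ : ℕ∞) f) : ContDiff ℝ (⊤ : ℕ∞) (pd i f) :=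
  (hf.fderiv_right (by simp)).clm_apply contDiff_const

lemma pd_add (i : Fin n) (hf : DifferentiableAt ℝ f x) (hg : DifferentiableAt ℝ g x) :
    pd i (fun y => f y + g y) x = pd i f x + pd i g x := by
  simp [pd, fderiv_fun_add hf hg]

lemma pd_mul (i : Fin n) (hf : DifferentiableAt ℝ f x) (hg : DifferentiableAt ℝ g x) :
    pd i (fun y => f y * g y) x = pd i f x * g x + f x * pd i g x := by
  simp [pd, fderiv_fun_mul hf hg]; ring

lemma pd_const (i : Fin n) (c : ℝ) : pd i (fun _ => c) x = 0 := by
  simp [pd]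

lemma pd_const_mul (i : Fin n) (c : ℝ) (hf : DifferentiableAt ℝ f x) :
    pd i (fun y => c * f y) x = c * pd i f x := by
  simp [pd, fderiv_const_mul hf c]

lemma pd_sum {ι : Type*} (s : Finset ι) (F : ι → (Fin n → ℝ) → ℝ) (i : Fin n)
    (hF : ∀ j ∈ s, DifferentiableAt ℝ (F j) x) :
    pd i (fun y => ∑ j ∈ s, F j y) x = ∑ j ∈ s, pd i (F j) x := by
  simp [pd, fderiv_fun_sum hF]

lemma pd_comm (i j : Fin n) (hf : ContDiff ℝ (⊤ : ℕ∞) f) (x : Fin n → ℝ) :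
    pd i (pd j f) x = pd j (pd i f) x := by
  have hd : Differentiable ℝ (fderiv ℝ f) := (hf.fderiv_right (m := (⊤ : ℕ∞)) (by simp)).differentiable (by simp)
  have h1 : ∀ y, HasFDerivAt f (fderiv ℝ f y) y := fun y =>
    ((hf.differentiable (by simp)) y).hasFDerivAt
  have h2 : HasFDerivAt (fderiv ℝ f) (fderiv ℝ (fderiv ℝ f) x) x := (hd x).hasFDerivAt
  have key := second_derivative_symmetric h1 h2 (Pi.single j 1) (Pi.single i 1)
  have e1 : ∀ (k : Fin n) (v : Fin n → ℝ), pd k (fun y => fderiv ℝ f y v) x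
      = fderiv ℝ (fderiv ℝ f) x (Pi.single k 1) v := by
    intro k v
    simp [pd, fderiv_clm_apply (hd x) (differentiableAt_const v)]
  calc pd i (pd j f) x = fderiv ℝ (fderiv ℝ f) x (Pi.single i 1) (Pi.single j 1) :=
        e1 i (Pi.single j 1)
    _ = fderiv ℝ (fderiv ℝ f) x (Pi.single j 1) (Pi.single i 1) := key.symm
    _ = pd j (pd i f) x := (e1 j (Pi.single i 1)).symm

lemma pd_comm3 (i j : Fin n) (hf : ContDiff ℝ (⊤ : ℕ∞) f) (x : Fin n → ℝ) :
    pd i (pd i (pd j f)) x = pd j (pd i (pd i f)) x := by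
  have h1 : pd i (pd j f) = pd j (pd i f) := funext (pd_comm i j hf)
  rw [h1]
  exact pd_comm i j (pd_smooth i hf) x

end helpers

/-- Divergence of a vector field. -/
noncomputable def Dv {n : ℕ} (X : (Fin n → ℝ) → (Fin n → ℝ)) (y : Fin n → ℝ) : ℝ :=
  ∑ k, pd k (fun w => X w k) y

/-- If `X` is a conformal Killing vector field of the flat metric, then
`Δ ∘ (X + λ Div X) = (X + μ Div X) ∘ Δ` with `λ = (n−2)/(2n)`, `μ = (n+2)/(2n)`. -/
theorem laplacian_first_order_symmetry (n : ℕ) (hn : 3 ≤ n)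
    (ε : Fin n → ℝ) (hε : ∀ i, ε i = 1 ∨ ε i = -1)
    (X : (Fin n → ℝ) → (Fin n → ℝ)) (hX : ContDiff ℝ (⊤ : ℕ∞) X)
    (hCKV : ∀ x : Fin n → ℝ, ∀ i j : Fin n,
      ε j * pd i (fun y => X y j) x + ε i * pd j (fun y => X y i) x =
        (2 / n) * (∑ k, pd k (fun y => X y k) x) * (if i = j then ε i else 0))
    (lam mu : ℝ) (hlam : lam = ((n : ℝ) - 2) / (2 * n)) (hmu : mu = ((n : ℝ) + 2) / (2 * n)) :
    ∀ f : (Fin n → ℝ) → ℝ, ContDiff ℝ (⊤ : ℕ∞) f → ∀ x : Fin n → ℝ,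
      Lap ε (fun y => (∑ i, X y i * pd i f y) + lam * (∑ i, pd i (fun w => X w i) y) * f y) x =
        (∑ i, X x i * pd i (Lap ε f) x) + mu * (∑ i, pd i (fun w => X w i) x) * Lap ε f x := by
  intro f hf x
  show Lap ε (fun y => (∑ j, X y j * pd j f y) + lam * Dv X y * f y) x =
        (∑ j, X x j * pd j (Lap ε f) x) + mu * Dv X x * Lap ε f x
  have hn0 : (0:ℝ) < n := by
    have : 0 < n := by omega
    exact_mod_cast this
  have hn2 : (2:ℝ) ≤ n := by exact_mod_cast (by omega : 2 ≤ n)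
  have hXc : ∀ j, ContDiff ℝ (⊤ : ℕ∞) (fun y => X y j) := contDiff_pi.mp hX
  have dd : ∀ {h : (Fin n → ℝ) → ℝ}, ContDiff ℝ (⊤ : ℕ∞) h → ∀ (y : Fin n → ℝ),
      DifferentiableAt ℝ h y := fun hh y => hh.differentiable (by simp) y
  have hDv : ContDiff ℝ (⊤ : ℕ∞) (Dv X) := ContDiff.sum fun k _ => pd_smooth k (hXc k)
  have hDvEq : ∀ y, Dv X y = ∑ k, pd k (fun w => X w k) y := fun _ => rfl
  have hPf : ∀ j, ContDiff ℝ (⊤ : ℕ∞) (pd j f) := fun j => pd_smooth j hf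
  have hP2f : ∀ i j, ContDiff ℝ (⊤ : ℕ∞) (pd i (pd j f)) := fun i j => pd_smooth i (hPf j)
  have hPX : ∀ i j, ContDiff ℝ (⊤ : ℕ∞) (pd i (fun w => X w j)) := fun i j => pd_smooth i (hXc j)
  have hε2 : ∀ i, ε i * ε i = 1 := fun i => by rcases hε i with h|h <;> rw [h] <;> norm_num
  have hpdD : ∀ (j : Fin n) (y : Fin n → ℝ),
      pd j (Dv X) y = ∑ k, pd j (pd k (fun w => X w k)) y := fun j y =>
    pd_sum univ (fun k => pd k (fun w => X w k)) j (fun k _ => dd (pd_smooth k (hXc k)) y)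
  -- derivative of the CKV equation
  have hdCKV : ∀ (y : Fin n → ℝ) (k i j : Fin n),
      ε j * pd k (pd i (fun w => X w j)) y + ε i * pd k (pd j (fun w => X w i)) y
        = 2 / (n:ℝ) * pd k (Dv X) y * (if i = j then ε i else 0) := by
    intro y k i j
    have hfun : (fun z => ε j * pd i (fun w => X w j) z + ε i * pd j (fun w => X w i) z)
        = fun z => 2 / (n:ℝ) * Dv X z * (if i = j then ε i else 0) :=
      funext fun z => hCKV z i j
    have e2 : pd k (fun z => ε j * pd i (fun w => X w j) z + ε i * pd j (fun w => X w i) z) y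
        = ε j * pd k (pd i (fun w => X w j)) y + ε i * pd k (pd j (fun w => X w i)) y := by
      rw [pd_add k (dd (contDiff_const.mul (hPX i j)) y) (dd (contDiff_const.mul (hPX j i)) y),
        pd_const_mul k _ (dd (hPX i j) y), pd_const_mul k _ (dd (hPX j i) y)]
    have e3 : pd k (fun z => 2 / (n:ℝ) * Dv X z * (if i = j then ε i else 0)) y
        = 2 / (n:ℝ) * pd k (Dv X) y * (if i = j then ε i else 0) := by
      rw [pd_mul k (dd (contDiff_const.mul hDv) y) (differentiableAt_const _),
        pd_const_mul k _ (dd hDv y), pd_const]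
      ring
    calc ε j * pd k (pd i (fun w => X w j)) y + ε i * pd k (pd j (fun w => X w i)) y
        = pd k (fun z => ε j * pd i (fun w => X w j) z + ε i * pd j (fun w => X w i) z) y :=
          e2.symm
      _ = pd k (fun z => 2 / (n:ℝ) * Dv X z * (if i = j then ε i else 0)) y := by rw [hfun]
      _ = 2 / (n:ℝ) * pd k (Dv X) y * (if i = j then ε i else 0) := e3
  -- identity (I) : contracted second derivative of X
  have hI : ∀ (y : Fin n → ℝ) (j : Fin n),
      ∑ i, ε i * pd i (pd i (fun w => X w j)) y = ε j * (2 / (n:ℝ) - 1) * pd j (Dv X) y := by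
    intro y j
    have hsum : ∑ i, ε i * (ε j * pd i (pd i (fun w => X w j)) y
          + ε i * pd i (pd j (fun w => X w i)) y)
        = ∑ i, ε i * (2 / (n:ℝ) * pd i (Dv X) y * (if i = j then ε i else 0)) :=
      Finset.sum_congr rfl fun i _ => by rw [hdCKV y i i j]
    have hL : ∑ i, ε i * (ε j * pd i (pd i (fun w => X w j)) y
          + ε i * pd i (pd j (fun w => X w i)) y)
        = ε j * (∑ i, ε i * pd i (pd i (fun w => X w j)) y)
          + ∑ i, pd i (pd j (fun w => X w i)) y := by
      rw [Finset.mul_sum, ← Finset.sum_add_distrib]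
      exact Finset.sum_congr rfl fun i _ => by
        linear_combination (pd i (pd j (fun w => X w i)) y) * hε2 i
    have hR : ∑ i, ε i * (2 / (n:ℝ) * pd i (Dv X) y * (if i = j then ε i else 0))
        = 2 / (n:ℝ) * pd j (Dv X) y := by
      rw [Finset.sum_eq_single j]
      · rw [if_pos rfl]; linear_combination (2 / (n:ℝ) * pd j (Dv X) y) * hε2 j
      · intro b _ hb; rw [if_neg hb]; ring
      · intro h; exact absurd (Finset.mem_univ j) h
    have hB : ∑ i, pd i (pd j (fun w => X w i)) y = pd j (Dv X) y := by
      rw [hpdD j y]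
      exact Finset.sum_congr rfl fun i _ => pd_comm i j (hXc i) y
    have hc : ε j * (∑ i, ε i * pd i (pd i (fun w => X w j)) y) + pd j (Dv X) y
        = 2 / (n:ℝ) * pd j (Dv X) y := by
      calc ε j * (∑ i, ε i * pd i (pd i (fun w => X w j)) y) + pd j (Dv X) y
          = ε j * (∑ i, ε i * pd i (pd i (fun w => X w j)) y)
            + ∑ i, pd i (pd j (fun w => X w i)) y := by rw [hB]
        _ = ∑ i, ε i * (ε j * pd i (pd i (fun w => X w j)) y
            + ε i * pd i (pd j (fun w => X w i)) y) := hL.symm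
        _ = ∑ i, ε i * (2 / (n:ℝ) * pd i (Dv X) y * (if i = j then ε i else 0)) := hsum
        _ = 2 / (n:ℝ) * pd j (Dv X) y := hR
    linear_combination ε j * hc
      - (∑ i, ε i * pd i (pd i (fun w => X w j)) y) * hε2 j
  -- identity (II) : the divergence is harmonic
  have hII : ∑ i, ε i * pd i (pd i (Dv X)) x = 0 := by
    have h1 : ∀ i : Fin n, pd i (pd i (Dv X)) x
        = ∑ k, pd k (pd i (pd i (fun w => X w k))) x := by
      intro i
      have e : pd i (Dv X) = fun y => ∑ k, pd i (pd k (fun w => X w k)) y :=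
        funext fun y => hpdD i y
      rw [e, pd_sum univ _ i (fun k _ => dd (pd_smooth i (pd_smooth k (hXc k))) x)]
      exact Finset.sum_congr rfl fun k _ => pd_comm3 i k (hXc k) x
    have h2 : ∀ k : Fin n, pd k (fun y => ∑ i, ε i * pd i (pd i (fun w => X w k)) y) x
        = ∑ i, ε i * pd k (pd i (pd i (fun w => X w k))) x := by
      intro k
      rw [pd_sum univ _ k (fun i _ =>
        dd (contDiff_const.mul (pd_smooth i (pd_smooth i (hXc k)))) x)]
      exact Finset.sum_congr rfl fun i _ =>
        pd_const_mul k (ε i) (dd (pd_smooth i (pd_smooth i (hXc k))) x)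
    have h3 : ∀ k : Fin n, pd k (fun y => ∑ i, ε i * pd i (pd i (fun w => X w k)) y) x
        = pd k (fun y => ε k * (2 / (n:ℝ) - 1) * pd k (Dv X) y) x := by
      intro k
      exact congrArg (fun (F : (Fin n → ℝ) → ℝ) => pd k F x) (funext fun y => hI y k)
    have h4 : ∀ k : Fin n, pd k (fun y => ε k * (2 / (n:ℝ) - 1) * pd k (Dv X) y) x
        = ε k * (2 / (n:ℝ) - 1) * pd k (pd k (Dv X)) x := fun k =>
      pd_const_mul k (ε k * (2 / (n:ℝ) - 1)) (dd (pd_smooth k hDv) x)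
    have hs : ∑ i, ε i * pd i (pd i (Dv X)) x
        = (2 / (n:ℝ) - 1) * ∑ i, ε i * pd i (pd i (Dv X)) x := by
      calc ∑ i, ε i * pd i (pd i (Dv X)) x
          = ∑ i, ∑ k, ε i * pd k (pd i (pd i (fun w => X w k))) x :=
            Finset.sum_congr rfl fun i _ => by rw [h1 i, Finset.mul_sum]
        _ = ∑ k, ∑ i, ε i * pd k (pd i (pd i (fun w => X w k))) x := Finset.sum_comm
        _ = ∑ k, pd k (fun y => ∑ i, ε i * pd i (pd i (fun w => X w k)) y) x :=
            Finset.sum_congr rfl fun k _ => (h2 k).symm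
        _ = ∑ k, ε k * (2 / (n:ℝ) - 1) * pd k (pd k (Dv X)) x :=
            Finset.sum_congr rfl fun k _ => (h3 k).trans (h4 k)
        _ = (2 / (n:ℝ) - 1) * ∑ k, ε k * pd k (pd k (Dv X)) x := by
            rw [Finset.mul_sum]
            exact Finset.sum_congr rfl fun k _ => by ring
    have hfac : (∑ i, ε i * pd i (pd i (Dv X)) x) * (2 - 2 / (n:ℝ)) = 0 := by
      linear_combination hs
    have h2n : 2 / (n:ℝ) ≤ 1 := by
      rw [div_le_one hn0]; exact hn2
    rcases mul_eq_zero.mp hfac with h | h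
    · exact h
    · linarith
  -- identity (III) : symmetrized first-derivative term
  have hCKV' : ∀ i j : Fin n, ε i * pd i (fun w => X w j) x + ε j * pd j (fun w => X w i) x
      = if i = j then 2 / (n:ℝ) * Dv X x * ε i else 0 := by
    intro i j
    have h := hCKV x i j
    by_cases hij : i = j
    · subst hij
      rw [if_pos rfl]
      rw [← hDvEq x] at h
      rw [if_pos rfl] at h
      exact h
    · rw [if_neg hij]
      rw [if_neg hij, mul_zero] at h
      linear_combination (ε i * ε j) * h - (ε i * pd i (fun y => X y j) x) * hε2 j
        - (ε j * pd j (fun y => X y i) x) * hε2 i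
  have hIII : (∑ i, ∑ j, ε i * pd i (fun w => X w j) x * pd i (pd j f) x)
      = 1 / (n:ℝ) * Dv X x * Lap ε f x := by
    have hTsymm : (∑ i, ∑ j, ε i * pd i (fun w => X w j) x * pd i (pd j f) x)
        = ∑ i, ∑ j, ε j * pd j (fun w => X w i) x * pd i (pd j f) x := by
      rw [Finset.sum_comm]
      exact Finset.sum_congr rfl fun a _ => Finset.sum_congr rfl fun b _ => by
        rw [pd_comm b a hf]
    have h2T : (∑ i, ∑ j, ε i * pd i (fun w => X w j) x * pd i (pd j f) x) * 2
        = 2 / (n:ℝ) * Dv X x * Lap ε f x := by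
      calc (∑ i, ∑ j, ε i * pd i (fun w => X w j) x * pd i (pd j f) x) * 2
          = (∑ i, ∑ j, ε i * pd i (fun w => X w j) x * pd i (pd j f) x)
            + ∑ i, ∑ j, ε j * pd j (fun w => X w i) x * pd i (pd j f) x := by
            rw [← hTsymm]; ring
        _ = ∑ i, ∑ j, (ε i * pd i (fun w => X w j) x + ε j * pd j (fun w => X w i) x)
              * pd i (pd j f) x := by
            rw [← Finset.sum_add_distrib]
            refine Finset.sum_congr rfl fun i _ => ?_
            rw [← Finset.sum_add_distrib]
            exact Finset.sum_congr rfl fun j _ => by ring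
        _ = ∑ i, ∑ j, (if i = j then 2 / (n:ℝ) * Dv X x * ε i else 0) * pd i (pd j f) x :=
            Finset.sum_congr rfl fun i _ => Finset.sum_congr rfl fun j _ => by
              rw [hCKV' i j]
        _ = ∑ i, 2 / (n:ℝ) * Dv X x * ε i * pd i (pd i f) x := by
            refine Finset.sum_congr rfl fun i _ => ?_
            rw [Finset.sum_eq_single i]
            · rw [if_pos rfl]
            · intro b _ hb; rw [if_neg (Ne.symm hb), zero_mul]
            · intro h; exact absurd (Finset.mem_univ i) h
        _ = 2 / (n:ℝ) * Dv X x * Lap ε f x := by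
            rw [Lap, Finset.mul_sum]
            exact Finset.sum_congr rfl fun i _ => by ring
    linear_combination h2T / 2
  -- pointwise first derivative of the transformed function
  have hg1 : ∀ (i : Fin n) (y : Fin n → ℝ),
      pd i (fun z => (∑ j, X z j * pd j f z) + lam * Dv X z * f z) y
        = (∑ j, (pd i (fun w => X w j) y * pd j f y + X y j * pd i (pd j f) y))
          + (lam * pd i (Dv X) y * f y + lam * Dv X y * pd i f y) := by
    intro i y
    rw [pd_add i (dd (ContDiff.sum fun j (_ : j ∈ univ) => (hXc j).mul (hPf j)) y)
      (dd ((contDiff_const.mul hDv).mul hf) y)]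
    congr 1
    · rw [pd_sum univ _ i (fun j _ => dd ((hXc j).mul (hPf j)) y)]
      exact Finset.sum_congr rfl fun j _ => pd_mul i (dd (hXc j) y) (dd (hPf j) y)
    · rw [pd_mul i (dd (contDiff_const.mul hDv) y) (dd hf y), pd_const_mul i lam (dd hDv y)]
  -- second derivative, fully expanded
  -- the triple-derivative commutation, as a rewrite rule
  have hc3 : ∀ i j : Fin n, pd i (pd i (pd j f)) x = pd j (pd i (pd i f)) x :=
    fun i j => pd_comm3 i j hf x
  have hg2 : ∀ i : Fin n,
      pd i (pd i (fun z => (∑ j, X z j * pd j f z) + lam * Dv X z * f z)) x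
        = (∑ j, (pd i (pd i (fun w => X w j)) x * pd j f x
            + pd i (fun w => X w j) x * pd i (pd j f) x
            + (pd i (fun w => X w j) x * pd i (pd j f) x + X x j * pd j (pd i (pd i f)) x)))
          + ((lam * pd i (pd i (Dv X)) x * f x + lam * pd i (Dv X) x * pd i f x)
            + (lam * pd i (Dv X) x * pd i f x + lam * Dv X x * pd i (pd i f) x)) := by
    intro i
    have e : pd i (fun z => (∑ j, X z j * pd j f z) + lam * Dv X z * f z)
        = fun y => (∑ j, (pd i (fun w => X w j) y * pd j f y + X y j * pd i (pd j f) y))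
          + (lam * pd i (Dv X) y * f y + lam * Dv X y * pd i f y) := funext (hg1 i)
    rw [e]
    rw [pd_add i
      (dd (ContDiff.sum fun j (_ : j ∈ univ) =>
        ((hPX i j).mul (hPf j)).add ((hXc j).mul (hP2f i j))) x)
      (dd (((contDiff_const.mul (pd_smooth i hDv)).mul hf).add
        ((contDiff_const.mul hDv).mul (hPf i))) x)]
    congr 1
    · rw [pd_sum univ _ i (fun j _ =>
        dd (((hPX i j).mul (hPf j)).add ((hXc j).mul (hP2f i j))) x)]
      refine Finset.sum_congr rfl fun j _ => ?_
      rw [pd_add i (dd ((hPX i j).mul (hPf j)) x) (dd ((hXc j).mul (hP2f i j)) x),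
        pd_mul i (dd (hPX i j) x) (dd (hPf j) x),
        pd_mul i (dd (hXc j) x) (dd (hP2f i j) x), hc3 i j]
    · rw [pd_add i (dd ((contDiff_const.mul (pd_smooth i hDv)).mul hf) x)
        (dd ((contDiff_const.mul hDv).mul (hPf i)) x),
        pd_mul i (dd (contDiff_const.mul (pd_smooth i hDv)) x) (dd hf x),
        pd_const_mul i lam (dd (pd_smooth i hDv) x),
        pd_mul i (dd (contDiff_const.mul hDv) x) (dd (hPf i) x),
        pd_const_mul i lam (dd hDv x)]
  -- derivative of the Laplacian of f
  have hpdLap : ∀ j : Fin n, pd j (Lap ε f) x = ∑ i, ε i * pd j (pd i (pd i f)) x := by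
    intro j
    have e : Lap ε f = fun y => ∑ i, ε i * pd i (pd i f) y := rfl
    rw [e, pd_sum univ _ j (fun i _ => dd (contDiff_const.mul (hP2f i i)) x)]
    exact Finset.sum_congr rfl fun i _ => pd_const_mul j (ε i) (dd (hP2f i i) x)
  -- assembling the Laplacian of the transformed function
  have hT1 : (∑ j, (∑ i, ε i * pd i (pd i (fun w => X w j)) x) * pd j f x)
      = ∑ i, ∑ j, ε i * pd i (pd i (fun w => X w j)) x * pd j f x := by
    rw [Finset.sum_comm]
    exact Finset.sum_congr rfl fun j _ => Finset.sum_mul _ _ _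
  have hT3 : (∑ j, X x j * pd j (Lap ε f) x)
      = ∑ i, ∑ j, X x j * (ε i * pd j (pd i (pd i f)) x) := by
    rw [Finset.sum_comm]
    exact Finset.sum_congr rfl fun j _ => by rw [hpdLap j, Finset.mul_sum]
  have hLap : Lap ε (fun y => (∑ j, X y j * pd j f y) + lam * Dv X y * f y) x
      = (∑ j, (∑ i, ε i * pd i (pd i (fun w => X w j)) x) * pd j f x)
        + 2 * (∑ i, ∑ j, ε i * pd i (fun w => X w j) x * pd i (pd j f) x)
        + (∑ j, X x j * pd j (Lap ε f) x)
        + lam * (∑ i, ε i * pd i (pd i (Dv X)) x) * f x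
        + 2 * lam * (∑ i, ε i * pd i (Dv X) x * pd i f x)
        + lam * Dv X x * Lap ε f x := by
    rw [Lap]
    calc ∑ i, ε i * pd i (pd i (fun z => (∑ j, X z j * pd j f z) + lam * Dv X z * f z)) x
        = ∑ i, ((∑ j, ε i * pd i (pd i (fun w => X w j)) x * pd j f x)
            + 2 * (∑ j, ε i * pd i (fun w => X w j) x * pd i (pd j f) x)
            + (∑ j, X x j * (ε i * pd j (pd i (pd i f)) x))
            + ((ε i * pd i (pd i (Dv X)) x) * (lam * f x)
              + (ε i * pd i (Dv X) x * pd i f x) * (2 * lam)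
              + (ε i * pd i (pd i f) x) * (lam * Dv X x))) := by
          refine Finset.sum_congr rfl fun i _ => ?_
          rw [hg2 i, mul_add, Finset.mul_sum]
          have e1 : ∑ j, ε i * (pd i (pd i (fun w => X w j)) x * pd j f x
                + pd i (fun w => X w j) x * pd i (pd j f) x
                + (pd i (fun w => X w j) x * pd i (pd j f) x
                  + X x j * pd j (pd i (pd i f)) x))
              = ∑ j, (ε i * pd i (pd i (fun w => X w j)) x * pd j f x
                + (2 * (ε i * pd i (fun w => X w j) x * pd i (pd j f) x)
                  + X x j * (ε i * pd j (pd i (pd i f)) x))) :=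
            Finset.sum_congr rfl fun j _ => by ring
          rw [e1, Finset.sum_add_distrib, Finset.sum_add_distrib, ← Finset.mul_sum]
          ring
      _ = (∑ j, (∑ i, ε i * pd i (pd i (fun w => X w j)) x) * pd j f x)
            + 2 * (∑ i, ∑ j, ε i * pd i (fun w => X w j) x * pd i (pd j f) x)
            + (∑ j, X x j * pd j (Lap ε f) x)
            + lam * (∑ i, ε i * pd i (pd i (Dv X)) x) * f x
            + 2 * lam * (∑ i, ε i * pd i (Dv X) x * pd i f x)
            + lam * Dv X x * Lap ε f x := by
          rw [hT1, hT3, Lap]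
          simp only [Finset.sum_add_distrib, ← Finset.mul_sum, ← Finset.sum_mul]
          ring
  -- final assembly
  have hA1 : (∑ j, (∑ i, ε i * pd i (pd i (fun w => X w j)) x) * pd j f x)
      = (2 / (n:ℝ) - 1) * ∑ i, ε i * pd i (Dv X) x * pd i f x := by
    rw [Finset.mul_sum]
    exact Finset.sum_congr rfl fun j _ => by rw [hI x j]; ring
  rw [hLap, hA1, hIII, hII]
  rw [hlam, hmu]
  have hne : (n:ℝ) ≠ 0 := ne_of_gt hn0
  field_simp
  ring
end

section
/- Let K be a traceless symmetric tensor and s ∈ ℕ. Then T^s(R^s K) = c·K where c = c(k, s, n) is a nonzero explicit constant depending only on the degree k of K, on s, and on n; concretely, for the harmonic-polynomial analogue, applying the p-Laplacian T s times to R^s times a harmonic polynomial of degree k−2s yields a nonzero multiple of that polynomial. -/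
/-
Since `∂ᵢR = 2εᵢpᵢ` and `εᵢ² = 1`, the Leibniz rule and Euler's identity give
`T(R·P) = (2n + 4d)·P + R·T(P)` for `P` homogeneous of degree `d`. Applied to `P = Rʲ·K` with
`K` traceless of degree `m`, induction on `j` gives
`T(Rʲ⁺¹·K) = 2(j+1)(n + 2m + 2j)·Rʲ·K`, so
`Tˢ(Rˢ·K) = ∏_{j<s} 2(j+1)(n + 2m + 2j) · K`, and every factor is positive when `n > 0`.
-/

open Finset MvPolynomial

/-- `R = ηⁱʲ pᵢpⱼ` as a polynomial in the fiber variables, `η = diag ε`. -/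
noncomputable def Rpol (n : ℕ) (ε : Fin n → ℝ) : MvPolynomial (Fin n) ℝ :=
  ∑ i, C (ε i) * X i * X i

/-- The trace operator `T = η_{ij} ∂_{pᵢ}∂_{pⱼ}` on polynomials in the fiber
variables. -/
noncomputable def Tpol (n : ℕ) (ε : Fin n → ℝ) (P : MvPolynomial (Fin n) ℝ) :
    MvPolynomial (Fin n) ℝ :=
  ∑ i, C (ε i) * pderiv i (pderiv i P)

section

variable {n : ℕ} {ε : Fin n → ℝ}

lemma Tpol_smul (a : ℝ) (P : MvPolynomial (Fin n) ℝ) :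
    Tpol n ε (a • P) = a • Tpol n ε P := by
  simp only [Tpol, Derivation.map_smul, mul_smul_comm, Finset.smul_sum]

lemma Tpol_iterate_smul (s : ℕ) (a : ℝ) (P : MvPolynomial (Fin n) ℝ) :
    (Tpol n ε)^[s] (a • P) = a • (Tpol n ε)^[s] P :=
  Function.Commute.iterate_left (fun P => Tpol_smul a P) s P

lemma pderiv_Rpol (i : Fin n) : pderiv i (Rpol n ε) = C (2 * ε i) * X i := by
  rw [Rpol, map_sum, Finset.sum_eq_single i]
  · simp only [pderiv_mul, pderiv_C, pderiv_X_self, map_mul, map_ofNat]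
    ring
  · intro j _ hji
    simp only [pderiv_mul, pderiv_C, pderiv_X_of_ne hji]
    ring
  · simp

lemma Rpol_isHomogeneous : (Rpol n ε).IsHomogeneous 2 :=
  IsHomogeneous.sum _ _ _ fun i _ =>
    ((isHomogeneous_C _ (ε i)).mul (isHomogeneous_X ℝ i)).mul (isHomogeneous_X ℝ i)

lemma Tpol_Rpol_mul_of_isHomogeneous (hε : ∀ i, ε i ^ 2 = 1) {d : ℕ}
    {P : MvPolynomial (Fin n) ℝ} (hP : P.IsHomogeneous d) :
    Tpol n ε (Rpol n ε * P) = (2 * n + 4 * d : ℝ) • P + Rpol n ε * Tpol n ε P := by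
  have summand (i : Fin n) : C (ε i) * pderiv i (pderiv i (Rpol n ε * P)) =
      (2 : ℝ) • P + (4 : ℝ) • (X i * pderiv i P)
        + Rpol n ε * (C (ε i) * pderiv i (pderiv i P)) := by
    have hCε : C (ε i) * C (ε i) = (1 : MvPolynomial (Fin n) ℝ) := by
      rw [← map_mul, ← sq, hε i, map_one]
    rw [pderiv_mul, map_add, pderiv_mul, pderiv_mul, pderiv_Rpol, pderiv_C_mul, pderiv_X_self]
    simp only [smul_eq_C_mul, map_mul, map_ofNat]
    linear_combination (2 * P + 4 * X i * pderiv i P) * hCε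
  have euler : ∑ i, X i * pderiv i P = (d : ℝ) • P := by
    rw [hP.sum_X_mul_pderiv, Nat.cast_smul_eq_nsmul]
  rw [Tpol, Finset.sum_congr rfl fun i _ => summand i, Finset.sum_add_distrib,
    Finset.sum_add_distrib, Finset.sum_const, ← Finset.smul_sum, euler, ← Finset.mul_sum,
    ← Tpol, Finset.card_univ, Fintype.card_fin, ← Nat.cast_smul_eq_nsmul ℝ, smul_smul, smul_smul,
    ← add_smul]
  ring_nf

lemma Tpol_Rpol_pow_succ_mul (hε : ∀ i, ε i ^ 2 = 1) {m : ℕ}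
    {K : MvPolynomial (Fin n) ℝ} (hK : K.IsHomogeneous m) (hTK : Tpol n ε K = 0) (j : ℕ) :
    Tpol n ε (Rpol n ε ^ (j + 1) * K) =
      (2 * (j + 1) * (n + 2 * m + 2 * j) : ℝ) • (Rpol n ε ^ j * K) := by
  induction j with
  | zero =>
    rw [pow_one, Tpol_Rpol_mul_of_isHomogeneous hε hK, hTK, mul_zero, add_zero, pow_zero,
      one_mul]
    ring_nf
  | succ j ih =>
    have hRK : (Rpol n ε ^ (j + 1) * K).IsHomogeneous (2 * (j + 1) + m) :=
      (Rpol_isHomogeneous.pow (j + 1)).mul hK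
    rw [pow_succ', mul_assoc, Tpol_Rpol_mul_of_isHomogeneous hε hRK, ih, mul_smul_comm,
      ← mul_assoc, ← pow_succ', ← add_smul]
    push_cast
    ring_nf

lemma Tpol_iterate_Rpol_pow_mul (hε : ∀ i, ε i ^ 2 = 1) {m : ℕ}
    {K : MvPolynomial (Fin n) ℝ} (hK : K.IsHomogeneous m) (hTK : Tpol n ε K = 0) (s : ℕ) :
    (Tpol n ε)^[s] (Rpol n ε ^ s * K) =
      (∏ j ∈ range s, (2 * (j + 1) * (n + 2 * m + 2 * j) : ℝ)) • K := by
  induction s with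
  | zero => simp
  | succ s ih =>
    rw [Function.iterate_succ_apply, Tpol_Rpol_pow_succ_mul hε hK hTK s, Tpol_iterate_smul, ih,
      smul_smul, prod_range_succ, mul_comm]

end

/-- Applying the trace operator `T` `s` times to `Rˢ·K`, for `K` traceless
homogeneous, yields a nonzero constant multiple `c = c(k,s,n)` of `K`. -/
theorem trace_power_of_R_power (n : ℕ) (hn : 3 ≤ n)
    (ε : Fin n → ℝ) (hε : ∀ i, ε i = 1 ∨ ε i = -1)
    (s m : ℕ) :
    ∃ c : ℝ, c ≠ 0 ∧
      ∀ K : MvPolynomial (Fin n) ℝ, K.IsHomogeneous m → Tpol n ε K = 0 →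
        (Tpol n ε)^[s] ((Rpol n ε) ^ s * K) = c • K := by
  have hε_sq (i : Fin n) : ε i ^ 2 = 1 := by rcases hε i with h | h <;> simp [h]
  have hn_pos : (0 : ℝ) < n := by exact_mod_cast (by omega : 0 < n)
  refine ⟨∏ j ∈ range s, (2 * (j + 1) * (n + 2 * m + 2 * j) : ℝ), ?_,
    fun K hK hTK => Tpol_iterate_Rpol_pow_mul hε_sq hK hTK s⟩
  exact prod_ne_zero_iff.mpr fun j _ => by positivity
end

section
/- The pull-back algebra morphism μ* : S(o(η)) → C^∞(T*ℝⁿ) induced by X ↦ μ_X annihilates the image of Λ⁴ℝⁿ in S₂(Λ²ℝⁿ): for any vectors a,b,c,d ∈ ℝⁿ, the quadratic element obtained by fully antisymmetrizing (a∧b)·(c∧d) over a,b,c,d in the symmetric algebra S(Λ²ℝⁿ) is sent to 0 by μ*. Equivalently, the function (x,p) ↦ Σ_σ sgn(σ) μ_{v_{σ(1)}∧v_{σ(2)}}(x,p)·μ_{v_{σ(3)}∧v_{σ(4)}}(x,p) vanishes identically on T*ℝⁿ. -/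
open Finset

lemma aux_det_sum (F : Fin 4 → Fin 4 → ℝ) (i j : Fin 4) (hij : i ≠ j) (h : F i = F j) :
    ∑ σ : Equiv.Perm (Fin 4), ((Equiv.Perm.sign σ : ℤ) : ℝ) *
      (F 0 (σ 0) * F 1 (σ 1) * F 2 (σ 2) * F 3 (σ 3)) = 0 := by
  have hd : (Matrix.of fun a b => F b a).det = 0 :=
    Matrix.det_zero_of_column_eq hij (fun k => by simp [h])
  rw [Matrix.det_apply] at hd
  rw [← hd]
  refine Finset.sum_congr rfl fun σ _ => ?_
  rw [Fin.prod_univ_four]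
  rw [Units.smul_def, zsmul_eq_mul]
  simp only [Matrix.of_apply]

/-- The moment function of the simple element `a ∧ b ∈ Λ²ℝⁿ ≅ o(η)`:
`μ_{a∧b}(x,p) = η(a,x)η(b,p) − η(b,x)η(a,p)`, for `η = diag ε`. -/
def muWedge {n : ℕ} (ε : Fin n → ℝ) (a b : Fin n → ℝ)
    (z : (Fin n → ℝ) × (Fin n → ℝ)) : ℝ :=
  (∑ i, ε i * a i * z.1 i) * (∑ i, ε i * b i * z.2 i) -
    (∑ i, ε i * b i * z.1 i) * (∑ i, ε i * a i * z.2 i)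

/-- The pull-back `μ*` annihilates `Λ⁴ℝⁿ ⊂ S₂(Λ²ℝⁿ)`: the full antisymmetrization
over `v₁,…,v₄` of `μ_{v₁∧v₂}·μ_{v₃∧v₄}` vanishes identically on `T*ℝⁿ`. -/
theorem moment_pullback_kills_lambda4 (n : ℕ)
    (ε : Fin n → ℝ) (hε : ∀ i, ε i = 1 ∨ ε i = -1)
    (v : Fin 4 → (Fin n → ℝ)) :
    ∀ z : (Fin n → ℝ) × (Fin n → ℝ),
      (∑ σ : Equiv.Perm (Fin 4), ((Equiv.Perm.sign σ : ℤ) : ℝ) *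
        muWedge ε (v (σ 0)) (v (σ 1)) z * muWedge ε (v (σ 2)) (v (σ 3)) z) = 0 := by
  intro z
  set A : Fin 4 → ℝ := fun k => ∑ i, ε i * v k i * z.1 i with hA
  set B : Fin 4 → ℝ := fun k => ∑ i, ε i * v k i * z.2 i with hB
  have hterm : ∀ σ : Equiv.Perm (Fin 4),
      ((Equiv.Perm.sign σ : ℤ) : ℝ) *
        muWedge ε (v (σ 0)) (v (σ 1)) z * muWedge ε (v (σ 2)) (v (σ 3)) z =
      ((Equiv.Perm.sign σ : ℤ) : ℝ) *
          (![A,B,A,B] 0 (σ 0) * ![A,B,A,B] 1 (σ 1) * ![A,B,A,B] 2 (σ 2) * ![A,B,A,B] 3 (σ 3))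
      - ((Equiv.Perm.sign σ : ℤ) : ℝ) *
          (![A,B,B,A] 0 (σ 0) * ![A,B,B,A] 1 (σ 1) * ![A,B,B,A] 2 (σ 2) * ![A,B,B,A] 3 (σ 3))
      - ((Equiv.Perm.sign σ : ℤ) : ℝ) *
          (![B,A,A,B] 0 (σ 0) * ![B,A,A,B] 1 (σ 1) * ![B,A,A,B] 2 (σ 2) * ![B,A,A,B] 3 (σ 3))
      + ((Equiv.Perm.sign σ : ℤ) : ℝ) *
          (![B,A,B,A] 0 (σ 0) * ![B,A,B,A] 1 (σ 1) * ![B,A,B,A] 2 (σ 2) * ![B,A,B,A] 3 (σ 3)) := by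
    intro σ
    simp only [muWedge, Matrix.cons_val_zero, Matrix.cons_val_one, Matrix.head_cons,
      Matrix.cons_val_two, Matrix.tail_cons, Matrix.cons_val_three, hA, hB]
    ring
  rw [Finset.sum_congr rfl fun σ _ => hterm σ]
  rw [Finset.sum_add_distrib, Finset.sum_sub_distrib, Finset.sum_sub_distrib]
  rw [aux_det_sum ![A,B,A,B] 0 2 (by decide) rfl,
      aux_det_sum ![A,B,B,A] 0 3 (by decide) rfl,
      aux_det_sum ![B,A,A,B] 1 2 (by decide) rfl,
      aux_det_sum ![B,A,B,A] 0 2 (by decide) rfl]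
  ring
end
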